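/- Any two-qubit separable density matrix $\rho = \sum_i p_i |u_i\rangle\langle u_i|\otimes|v_i\rangle\langle v_i|$ satisfies $\langle I_2\otimes I_2 + A_3\otimes B_3\rangle_\rho \geq \big(\langle I_2\otimes B_3 + A_3\otimes I_2\rangle_\rho^2 + \langle A_1\otimes B_1 + A_2\otimes B_2\rangle_\rho^2\big)^{1/2}$ for all observables $A_i = U\sigma_i U^\dagger$, $B_j = V\sigma_j V^\dagger$ with $U,V$ arbitrary $2\times 2$ unitaries. -/

import Mathlib

open Matrix Kronecker
open scoped ComplexOrder

noncomputable section

abbrev M2 : Type := Matrix (Fin 2) (Fin 2) ℂ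
abbrev M3 : Type := Matrix (Fin 3) (Fin 3) ℂ
abbrev M6 : Type := Matrix (Fin 2 × Fin 3) (Fin 2 × Fin 3) ℂ

/-- Pauli matrices -/
def sig1 : M2 := Matrix.single 0 1 1 + Matrix.single 1 0 1
def sig2 : M2 := Complex.I • Matrix.single 0 1 1 - Complex.I • Matrix.single 1 0 1
def sig3 : M2 := Matrix.single 0 0 1 - Matrix.single 1 1 1

/-- Gell-Mann-type matrices on C^3 -/
def lam1 : M3 := Matrix.single 0 0 1 - Matrix.single 1 1 1
def lam2 : M3 := Matrix.single 0 0 1 - Matrix.single 2 2 1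
def lam3 : M3 := Matrix.single 0 1 1 + Matrix.single 1 0 1
def lam4 : M3 := Complex.I • Matrix.single 0 1 1 - Complex.I • Matrix.single 1 0 1

/-- partial transpose on the first (2-dimensional) factor -/
def PT {d : ℕ} (ρ : Matrix (Fin 2 × Fin d) (Fin 2 × Fin d) ℂ) :
    Matrix (Fin 2 × Fin d) (Fin 2 × Fin d) ℂ :=
  fun p q => ρ (q.1, p.2) (p.1, q.2)

/-- expectation value of an observable M in the state ρ -/
def expval {n : Type} [Fintype n] (ρ M : Matrix n n ℂ) : ℝ := ((ρ * M).trace).re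

/-- projector |ψ⟩⟨ψ| -/
def proj {n : Type} (ψ : n → ℂ) : Matrix n n ℂ := Matrix.vecMulVec ψ (star ψ)


abbrev M4 : Type := Matrix (Fin 2 × Fin 2) (Fin 2 × Fin 2) ℂ

def QA (U : M2) (i : Fin 3) : M2 := U * (![sig1, sig2, sig3] i) * Uᴴ

/-- I⊗I + A₃⊗B₃ -/
def Q0 (U V : M2) : M4 := (1:M2) ⊗ₖ (1:M2) + QA U 2 ⊗ₖ QA V 2
/-- I⊗B₃ + A₃⊗I -/
def Q1 (U V : M2) : M4 := (1:M2) ⊗ₖ QA V 2 + QA U 2 ⊗ₖ (1:M2)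
/-- A₁⊗B₁ + A₂⊗B₂ -/
def Q2 (U V : M2) : M4 := QA U 0 ⊗ₖ QA V 0 + QA U 1 ⊗ₖ QA V 1

/-!
For a pure product state `u ⊗ v`, let `a` and `b` be the Bloch vectors of `u` and `v` read in the
frames `U` and `V` (so `aᵢ = ⟨Aᵢ⟩_u`, `bⱼ = ⟨Bⱼ⟩_v`, and `|a| = |b| = 1`). The three expectations
are `a₃ + b₃`, `a₁b₁ + a₂b₂` and `1 + a₃b₃`, and since
`(1 + a₃b₃)² - (a₃ + b₃)² = (1 - a₃²)(1 - b₃²)` the inequality reduces to Cauchy–Schwarz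
`(a₁b₁ + a₂b₂)² ≤ (a₁² + a₂²)(b₁² + b₂²)`. Both sides are linear in `ρ`, and the left side is the
norm of a vector, so the triangle inequality carries the bound to convex combinations.
-/

lemma sqrt_sq_add_sq_le_one_add_mul {a₁ a₂ a₃ b₁ b₂ b₃ : ℝ} (ha : a₁ ^ 2 + a₂ ^ 2 + a₃ ^ 2 ≤ 1)
    (hb : b₁ ^ 2 + b₂ ^ 2 + b₃ ^ 2 ≤ 1) :
    √((a₃ + b₃) ^ 2 + (a₁ * b₁ + a₂ * b₂) ^ 2) ≤ 1 + a₃ * b₃ := by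
  have cauchy_schwarz : (a₁ * b₁ + a₂ * b₂) ^ 2 ≤ (a₁ ^ 2 + a₂ ^ 2) * (b₁ ^ 2 + b₂ ^ 2) := by
    nlinarith [sq_nonneg (a₁ * b₂ - a₂ * b₁)]
  have key : (a₁ * b₁ + a₂ * b₂) ^ 2 ≤ (1 - a₃ ^ 2) * (1 - b₃ ^ 2) :=
    cauchy_schwarz.trans (mul_le_mul (by linarith) (by linarith) (by positivity)
      (by nlinarith [sq_nonneg b₁, sq_nonneg b₂]))
  rw [Real.sqrt_le_iff]
  constructor
  · nlinarith [sq_nonneg (a₃ + b₃), sq_nonneg a₁, sq_nonneg a₂, sq_nonneg b₁, sq_nonneg b₂]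
  · linear_combination key

lemma sqrt_sq_add_sq_le_sum {ι : Type*} (s : Finset ι) (p x y e : ι → ℝ) (hp : ∀ i ∈ s, 0 ≤ p i)
    (h : ∀ i ∈ s, √(x i ^ 2 + y i ^ 2) ≤ e i) :
    √((∑ i ∈ s, p i * x i) ^ 2 + (∑ i ∈ s, p i * y i) ^ 2) ≤ ∑ i ∈ s, p i * e i := by
  let z : ι → ℂ := fun i => ⟨x i, y i⟩
  have hz : ∀ i, ‖z i‖ = √(x i ^ 2 + y i ^ 2) := fun i => Complex.norm_eq_sqrt_sq_add_sq _
  calc √((∑ i ∈ s, p i * x i) ^ 2 + (∑ i ∈ s, p i * y i) ^ 2) = ‖∑ i ∈ s, p i • z i‖ := by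
        rw [Complex.norm_eq_sqrt_sq_add_sq]; simp [z, Complex.re_sum, Complex.im_sum]
    _ ≤ ∑ i ∈ s, ‖p i • z i‖ := norm_sum_le _ _
    _ ≤ ∑ i ∈ s, p i * e i := Finset.sum_le_sum fun i hi => by
        rw [norm_smul, Real.norm_of_nonneg (hp i hi), hz]
        exact mul_le_mul_of_nonneg_left (h i hi) (hp i hi)

lemma expval_add {n : Type} [Fintype n] (ρ M N : Matrix n n ℂ) :
    expval ρ (M + N) = expval ρ M + expval ρ N := by
  rw [expval, expval, expval, Matrix.mul_add, trace_add, Complex.add_re]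

lemma expval_sum_smul {ι n : Type} [Fintype n] (s : Finset ι) (c : ι → ℝ)
    (P : ι → Matrix n n ℂ) (M : Matrix n n ℂ) :
    expval (∑ i ∈ s, (c i : ℂ) • P i) M = ∑ i ∈ s, c i * expval (P i) M := by
  simp only [expval, Finset.sum_mul, smul_mul, trace_sum, trace_smul, Complex.re_sum,
    smul_eq_mul, Complex.re_ofReal_mul]

lemma trace_proj_mul {n : Type} [Fintype n] (w : n → ℂ) (M : Matrix n n ℂ) :
    (proj w * M).trace = star w ⬝ᵥ M *ᵥ w := by
  rw [proj, vecMulVec_mul, trace_vecMulVec, dotProduct_comm, dotProduct_mulVec]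

lemma trace_proj_mul_of_isHermitian {n : Type} [Fintype n] (w : n → ℂ) {M : Matrix n n ℂ}
    (hM : M.IsHermitian) : (proj w * M).trace = expval (proj w) M := by
  refine Complex.ext rfl ?_
  simpa [expval, trace_proj_mul] using hM.im_star_dotProduct_mulVec_self w

lemma expval_proj_one {n : Type} [Fintype n] [DecidableEq n] (w : n → ℂ) :
    expval (proj w) 1 = (star w ⬝ᵥ w).re := by
  rw [expval, trace_proj_mul, one_mulVec]

lemma expval_proj_kronecker_proj {m n : Type} [Fintype m] [Fintype n] (u : m → ℂ) (v : n → ℂ)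
    {A : Matrix m m ℂ} {B : Matrix n n ℂ} (hA : A.IsHermitian) (hB : B.IsHermitian) :
    expval (proj u ⊗ₖ proj v) (A ⊗ₖ B) = expval (proj u) A * expval (proj v) B := by
  rw [expval, ← mul_kronecker_mul, trace_kronecker, trace_proj_mul_of_isHermitian u hA,
    trace_proj_mul_of_isHermitian v hB, ← Complex.ofReal_mul, Complex.ofReal_re]

lemma expval_proj_conj {n : Type} [Fintype n] (u : n → ℂ) (U M : Matrix n n ℂ) :
    expval (proj u) (U * M * Uᴴ) = expval (proj (Uᴴ *ᵥ u)) M := by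
  rw [expval, expval, trace_proj_mul, trace_proj_mul, star_mulVec, conjTranspose_conjTranspose,
    ← mulVec_mulVec, ← mulVec_mulVec, dotProduct_mulVec, dotProduct_mulVec, dotProduct_mulVec,
    vecMul_vecMul]

lemma star_mulVec_dotProduct_mulVec_of_mem_unitaryGroup {n : Type} [Fintype n] [DecidableEq n]
    {U : Matrix n n ℂ} (hU : U ∈ unitaryGroup n ℂ) (u : n → ℂ) :
    star (Uᴴ *ᵥ u) ⬝ᵥ Uᴴ *ᵥ u = star u ⬝ᵥ u := by
  rw [star_mulVec, conjTranspose_conjTranspose, ← dotProduct_mulVec, mulVec_mulVec,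
    ← star_eq_conjTranspose, mem_unitaryGroup_iff.mp hU, one_mulVec]

lemma isHermitian_pauli (i : Fin 3) : (![sig1, sig2, sig3] i).IsHermitian := by
  fin_cases i <;> ext a b <;> fin_cases a <;> fin_cases b <;> simp [sig1, sig2, sig3, Matrix.single]

lemma sum_sq_expval_pauli (w : Fin 2 → ℂ) :
    expval (proj w) sig1 ^ 2 + expval (proj w) sig2 ^ 2 + expval (proj w) sig3 ^ 2
      = (star w ⬝ᵥ w).re ^ 2 := by
  simp only [expval, sig1, single, Fin.isValue, of_add_of, trace_proj_mul, dotProduct, Pi.star_apply,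
    RCLike.star_def, mulVec, of_apply, Pi.add_apply, Fin.sum_univ_two, one_ne_zero, and_false,
    ↓reduceIte, and_true, zero_add, ite_mul, one_mul, zero_mul, zero_ne_one, add_zero,
    Complex.add_re, Complex.mul_re, Complex.conj_re, Complex.conj_im, neg_mul, sub_neg_eq_add, sig2,
    smul_of, of_sub_of, Pi.sub_apply, Pi.smul_apply, smul_eq_mul, mul_ite, mul_one, mul_zero,
    zero_sub, sub_zero, neg_zero, mul_neg, Complex.I_re, Complex.I_im, Complex.mul_im,
    Complex.neg_re, neg_add_rev, neg_neg, sig3]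
  ring

lemma isHermitian_QA (U : M2) (i : Fin 3) : (QA U i).IsHermitian :=
  isHermitian_mul_mul_conjTranspose U (isHermitian_pauli i)

lemma sum_sq_expval_QA {w : Fin 2 → ℂ} (hw : star w ⬝ᵥ w = 1) {U : M2}
    (hU : U ∈ unitaryGroup (Fin 2) ℂ) :
    expval (proj w) (QA U 0) ^ 2 + expval (proj w) (QA U 1) ^ 2 + expval (proj w) (QA U 2) ^ 2
      = 1 := by
  change expval (proj w) (U * sig1 * Uᴴ) ^ 2 + expval (proj w) (U * sig2 * Uᴴ) ^ 2
    + expval (proj w) (U * sig3 * Uᴴ) ^ 2 = 1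
  rw [expval_proj_conj, expval_proj_conj, expval_proj_conj, sum_sq_expval_pauli,
    star_mulVec_dotProduct_mulVec_of_mem_unitaryGroup hU, hw, Complex.one_re, one_pow]

lemma sqrt_expval_Q1_Q2_le_expval_Q0_proj_kronecker {u v : Fin 2 → ℂ}
    (hu : star u ⬝ᵥ u = 1) (hv : star v ⬝ᵥ v = 1) {U V : M2}
    (hU : U ∈ unitaryGroup (Fin 2) ℂ) (hV : V ∈ unitaryGroup (Fin 2) ℂ) :
    √(expval (proj u ⊗ₖ proj v) (Q1 U V) ^ 2 + expval (proj u ⊗ₖ proj v) (Q2 U V) ^ 2)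
      ≤ expval (proj u ⊗ₖ proj v) (Q0 U V) := by
  have hI : (1 : M2).IsHermitian := isHermitian_one
  simp only [Q0, Q1, Q2, expval_add, expval_proj_kronecker_proj u v hI hI,
    expval_proj_kronecker_proj u v hI (isHermitian_QA _ _),
    expval_proj_kronecker_proj u v (isHermitian_QA _ _) hI,
    expval_proj_kronecker_proj u v (isHermitian_QA _ _) (isHermitian_QA _ _),
    expval_proj_one, hu, hv, Complex.one_re, one_mul, mul_one]
  rw [add_comm (expval (proj v) _)]
  exact sqrt_sq_add_sq_le_one_add_mul (sum_sq_expval_QA hu hU).le (sum_sq_expval_QA hv hV).le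

theorem stmt_11_general (ρ : M4) (n : ℕ) (p : Fin n → ℝ)
    (u v : Fin n → (Fin 2 → ℂ))
    (hp0 : ∀ i, 0 ≤ p i)
    (hu : ∀ i, star (u i) ⬝ᵥ u i = 1) (hv : ∀ i, star (v i) ⬝ᵥ v i = 1)
    (hρ : ρ = ∑ i, ((p i : ℝ) : ℂ) • (proj (u i) ⊗ₖ proj (v i)))
    (U : M2) (hU : U ∈ Matrix.unitaryGroup (Fin 2) ℂ)
    (V : M2) (hV : V ∈ Matrix.unitaryGroup (Fin 2) ℂ) :
    Real.sqrt ((expval ρ (Q1 U V))^2 + (expval ρ (Q2 U V))^2)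
      ≤ expval ρ (Q0 U V) := by
  subst hρ
  rw [expval_sum_smul, expval_sum_smul, expval_sum_smul]
  exact sqrt_sq_add_sq_le_sum _ p _ _ _ (fun i _ => hp0 i) fun i _ =>
    sqrt_expval_Q1_Q2_le_expval_Q0_proj_kronecker (hu i) (hv i) hU hV

theorem stmt_11 (ρ : M4) (n : ℕ) (p : Fin n → ℝ)
    (u v : Fin n → (Fin 2 → ℂ))
    (hp0 : ∀ i, 0 ≤ p i) (hp1 : ∑ i, p i = 1)
    (hu : ∀ i, star (u i) ⬝ᵥ u i = 1) (hv : ∀ i, star (v i) ⬝ᵥ v i = 1)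
    (hρ : ρ = ∑ i, ((p i : ℝ) : ℂ) • (proj (u i) ⊗ₖ proj (v i)))
    (U : M2) (hU : U ∈ Matrix.unitaryGroup (Fin 2) ℂ)
    (V : M2) (hV : V ∈ Matrix.unitaryGroup (Fin 2) ℂ) :
    Real.sqrt ((expval ρ (Q1 U V))^2 + (expval ρ (Q2 U V))^2)
      ≤ expval ρ (Q0 U V) :=
  stmt_11_general ρ n p u v hp0 hu hv hρ U hU V hV
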